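/- If a tree pattern transformation ρ: σ ⇝ σ* transforms t_{u,v} into t*_{u,v} for some edge (u,v) of G, then every witnessing match of σ in t_{u,v} maps the root of σ to the root of t_{u,v}, and σ* is a single node whose label is either the label ℓ_{u,v}, or a node variable that occurs in σ at the end of a path of length ℓ from the root, or a tree variable that occurs in σ at the end of a path of length ℓ from the root. -/
import Mathlib


/-!  Basic framework: Σ-labelled ordered trees, tree patterns, matches,
tree pattern transformations, and explanation in at most `s` steps. -/

/-- A `α`-labelled ordered tree: a finite, nonempty, prefix-closed set of positions
(words over ℕ, with contiguous sibling indices) together with a labelling function.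
The labelling function is total; only its values on `nodes` are relevant. -/
structure LTree (α : Type) where
  nodes : Set (List ℕ)
  finite : nodes.Finite
  root_mem : [] ∈ nodes
  prefix_closed : ∀ v j, v ++ [j] ∈ nodes → v ∈ nodes
  sibling_closed : ∀ v j j', j' ≤ j → v ++ [j] ∈ nodes → v ++ [j'] ∈ nodes
  label : List ℕ → α

namespace LTree

/-- The subtree of `t` rooted at position `v`. -/
def subtreeAt {α : Type} (t : LTree α) (v : List ℕ) : LTree α where
  nodes := insert [] {w | v ++ w ∈ t.nodes}
  finite := by
    apply Set.Finite.insert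
    have h : {w | v ++ w ∈ t.nodes} = (fun w => v ++ w) ⁻¹' t.nodes := rfl
    rw [h]
    exact Set.Finite.preimage
      (Set.injOn_of_injective (fun a b hab => List.append_cancel_left hab)) t.finite
  root_mem := Set.mem_insert _ _
  prefix_closed := by
    intro w j hw
    rcases Set.mem_insert_iff.mp hw with h | h
    · exact absurd h (by simp)
    · refine Set.mem_insert_iff.mpr (Or.inr ?_)
      exact t.prefix_closed (v ++ w) j (by rw [List.append_assoc]; exact h)
  sibling_closed := by
    intro w j j' hle hw
    rcases Set.mem_insert_iff.mp hw with h | h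
    · exact absurd h (by simp)
    · refine Set.mem_insert_iff.mpr (Or.inr ?_)
      have := t.sibling_closed (v ++ w) j j' hle (by rw [List.append_assoc]; exact h)
      simpa [List.append_assoc] using this
  label := fun w => t.label (v ++ w)

/-- Isomorphism of (position-based) trees: same positions, same labels on them. -/
def ExtEq {α : Type} (s t : LTree α) : Prop :=
  s.nodes = t.nodes ∧ ∀ v ∈ s.nodes, s.label v = t.label v

/-- The contexts of `t` at `p` and of `t'` at `p` are isomorphic:
`t` and `t'` agree (nodes and labels) outside the subtrees rooted at `p`. -/
def ContextEq {α : Type} (t t' : LTree α) (p : List ℕ) : Prop :=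
  (∀ w, ¬ p <+: w → (w ∈ t.nodes ↔ w ∈ t'.nodes)) ∧
  (∀ w ∈ t.nodes, ¬ p <+: w → t.label w = t'.label w)

end LTree

/-- A tree pattern over labels `α`, node variables `ν` and tree variables `τ`:
an `(α ⊕ ν ⊕ τ)`-labelled ordered tree in which tree-variable nodes are leaves. -/
structure TreePattern (α ν τ : Type) extends LTree (α ⊕ ν ⊕ τ) where
  treeVar_leaf : ∀ v ∈ nodes, (∃ X : τ, label v = Sum.inr (Sum.inr X)) →
    ∀ j, v ++ [j] ∉ nodes

/-- A match of the tree pattern `σ` in the tree `t`, given by `μ` on `σ.nodes`. -/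
structure IsMatch {α ν τ : Type} (σ : TreePattern α ν τ) (t : LTree α)
    (μ : List ℕ → List ℕ) : Prop where
  mem : ∀ v ∈ σ.nodes, μ v ∈ t.nodes
  inj : ∀ u ∈ σ.nodes, ∀ v ∈ σ.nodes, μ u = μ v → u = v
  const : ∀ v ∈ σ.nodes, ∀ a : α, σ.label v = Sum.inl a → t.label (μ v) = a
  nodeVar : ∀ u ∈ σ.nodes, ∀ v ∈ σ.nodes, ∀ x : ν,
    σ.label u = Sum.inr (Sum.inl x) → σ.label v = Sum.inr (Sum.inl x) →
    t.label (μ u) = t.label (μ v)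
  treeVar : ∀ u ∈ σ.nodes, ∀ v ∈ σ.nodes, ∀ X : τ,
    σ.label u = Sum.inr (Sum.inr X) → σ.label v = Sum.inr (Sum.inr X) →
    LTree.ExtEq (t.subtreeAt (μ u)) (t.subtreeAt (μ v))
  child_to : ∀ v ∈ σ.nodes, ∀ j, v ++ [j] ∈ σ.nodes → ∃ m, μ (v ++ [j]) = μ v ++ [m]
  child_exact : ∀ v ∈ σ.nodes, ∀ m, μ v ++ [m] ∈ t.nodes →
    ∃ j, v ++ [j] ∈ σ.nodes ∧ μ (v ++ [j]) = μ v ++ [m]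
  child_order : ∀ v ∈ σ.nodes, ∀ j₁ j₂ m₁ m₂, v ++ [j₁] ∈ σ.nodes → v ++ [j₂] ∈ σ.nodes →
    μ (v ++ [j₁]) = μ v ++ [m₁] → μ (v ++ [j₂]) = μ v ++ [m₂] → j₁ < j₂ → m₁ < m₂

/-- `σ` matches `t` at the root. -/
def MatchesAtRoot {α ν τ : Type} (σ : TreePattern α ν τ) (t : LTree α) : Prop :=
  ∃ μ, IsMatch σ t μ ∧ μ [] = []

/-- A tree pattern transformation: body and head patterns such that all variables of
the head occur in the body. -/
structure TPT (α ν τ : Type) where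
  body : TreePattern α ν τ
  head : TreePattern α ν τ
  nodeVar_sub : ∀ x : ν, (∃ v ∈ head.nodes, head.label v = Sum.inr (Sum.inl x)) →
    ∃ v ∈ body.nodes, body.label v = Sum.inr (Sum.inl x)
  treeVar_sub : ∀ X : τ, (∃ v ∈ head.nodes, head.label v = Sum.inr (Sum.inr X)) →
    ∃ v ∈ body.nodes, body.label v = Sum.inr (Sum.inr X)

/-- `ρ` transforms `t` into `t'` via the witnessing matches `μ` (of the body in `t`)
and `μ'` (of the head in `t'`). -/
structure TransformsVia {α ν τ : Type} (ρ : TPT α ν τ) (t t' : LTree α)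
    (μ μ' : List ℕ → List ℕ) : Prop where
  body_match : IsMatch ρ.body t μ
  head_match : IsMatch ρ.head t' μ'
  same_pos : μ [] = μ' []
  context_eq : LTree.ContextEq t t' (μ [])
  nodeVar_consistent : ∀ u ∈ ρ.body.nodes, ∀ u' ∈ ρ.head.nodes, ∀ x : ν,
    ρ.body.label u = Sum.inr (Sum.inl x) → ρ.head.label u' = Sum.inr (Sum.inl x) →
    t.label (μ u) = t'.label (μ' u')
  treeVar_consistent : ∀ u ∈ ρ.body.nodes, ∀ u' ∈ ρ.head.nodes, ∀ X : τ,
    ρ.body.label u = Sum.inr (Sum.inr X) → ρ.head.label u' = Sum.inr (Sum.inr X) →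
    LTree.ExtEq (t.subtreeAt (μ u)) (t'.subtreeAt (μ' u'))

/-- `ρ` transforms `t` into `t'`  (written `t ⇝_ρ t'` in the paper). -/
def Transforms {α ν τ : Type} (ρ : TPT α ν τ) (t t' : LTree α) : Prop :=
  ∃ μ μ', TransformsVia ρ t t' μ μ'

/-- One rewriting step with a set `Γ` of transformations. -/
def StepRel {α ν τ : Type} (Γ : Set (TPT α ν τ)) (t t' : LTree α) : Prop :=
  ∃ ρ ∈ Γ, Transforms ρ t t'

/-- `Γ` explains the pair `(t, t')` in at most `s` steps. -/
def ExplainsIn {α ν τ : Type} (Γ : Set (TPT α ν τ)) (s : ℕ) (t t' : LTree α) : Prop :=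
  ∃ k ≤ s, ∃ f : ℕ → LTree α, f 0 = t ∧ f k = t' ∧ ∀ i < k, StepRel Γ (f i) (f (i + 1))

/-- The `i`-th leaf of the full binary tree of depth `ℓ` (binary digits of `i`,
most significant bit first). -/
def binLeaf (ℓ i : ℕ) : List ℕ := (List.range ℓ).map fun k => i / 2 ^ (ℓ - 1 - k) % 2

/-- The positions of the full binary tree of depth `ℓ`. -/
def fullBinNodes (ℓ : ℕ) : Set (List ℕ) := {w | w.length ≤ ℓ ∧ ∀ x ∈ w, x < 2}

/-- The full binary tree of depth `ℓ`, with a given labelling. -/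
def fullBinTree {α : Type} (ℓ : ℕ) (lab : List ℕ → α) : LTree α where
  nodes := fullBinNodes ℓ
  finite := by
    have hsub : fullBinNodes ℓ ⊆
        (fun l : List (Fin 2) => l.map Fin.val) '' {l | l.length ≤ ℓ} := by
      rintro w ⟨hlen, hmem⟩
      refine ⟨w.pmap (fun x hx => (⟨x, hx⟩ : Fin 2)) hmem, by simpa using hlen, ?_⟩
      simp [List.map_pmap]
    exact Set.Finite.subset ((List.finite_length_le (Fin 2) ℓ).image _) hsub
  root_mem := by simp [fullBinNodes]
  prefix_closed := by
    rintro v j ⟨hlen, hmem⟩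
    refine ⟨?_, fun x hx => hmem x (by simp [hx])⟩
    simp only [List.length_append, List.length_cons, List.length_nil] at hlen
    omega
  sibling_closed := by
    rintro v j j' hle ⟨hlen, hmem⟩
    refine ⟨by simpa using hlen, ?_⟩
    intro x hx
    rcases List.mem_append.mp hx with h | h
    · exact hmem x (by simp [h])
    · have hj : j < 2 := hmem j (by simp)
      simp only [List.mem_singleton] at h
      omega
  label := lab

/-- The tree with a single (root) node, labelled `a`. -/
def singleTree {α : Type} (a : α) : LTree α where
  nodes := {[]}
  finite := Set.finite_singleton _
  root_mem := rfl
  prefix_closed := by rintro v j h; simp at h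
  sibling_closed := by rintro v j j' _ h; simp at h
  label := fun _ => a

/-- The source tree `t_{u,v}` associated with the edge `(u,v)`: the full binary tree of
depth `ℓ`, whose leaves corresponding to `u` and `v` (the `u`-th and `v`-th leaves in
left-to-right order) are labelled with the edge label `ℓ_{u,v}`, and all other nodes
are labelled `b` (encoded as `none`). -/
def tEdge (n ℓ : ℕ) (u v : Fin n) : LTree (Option (Sym2 (Fin n))) :=
  fullBinTree ℓ fun w =>
    if w = binLeaf ℓ u.val ∨ w = binLeaf ℓ v.val then some s(u, v) else none

/-- The target tree `t*_{u,v}`: a single node labelled `ℓ_{u,v}`. -/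
def tEdgeStar (n : ℕ) (u v : Fin n) : LTree (Option (Sym2 (Fin n))) :=
  singleTree (some s(u, v))

lemma match_len_pres {α ν τ : Type} {σ : TreePattern α ν τ} {t : LTree α}
    {μ : List ℕ → List ℕ} (hm : IsMatch σ t μ) (hroot : μ [] = []) :
    ∀ w ∈ σ.nodes, (μ w).length = w.length := by
  intro w
  induction w using List.reverseRecOn with
  | nil => intro _; simp [hroot]
  | append_singleton w j ih =>
    intro hw
    have hw' : w ∈ σ.nodes := σ.prefix_closed w j hw
    obtain ⟨m, hm'⟩ := hm.child_to w hw' j hw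
    simp [hm', ih hw']

lemma binLeaf_len (ℓ i : ℕ) : (binLeaf ℓ i).length = ℓ := by simp [binLeaf]

/-- **Statement 4.** If a tree pattern transformation `ρ : σ ⇝ σ*` transforms `t_{u,v}`
into `t*_{u,v}` for some edge `(u,v)` of `G`, then every witnessing pair of matches maps
the root of `σ` to the root of `t_{u,v}`, and `σ*` is a single node whose label is either
the edge label `ℓ_{u,v}`, or a node variable occurring in `σ` at the end of a path of
length `ℓ` from the root, or a tree variable occurring in `σ` at the end of a path of
length `ℓ` from the root. -/
theorem stmt_4 {NV TV : Type} (n ℓ : ℕ) (G : SimpleGraph (Fin n))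
    (hℓ₁ : n ≤ 2 ^ ℓ) (hℓ₂ : ∀ m : ℕ, n ≤ 2 ^ m → ℓ ≤ m)
    (u v : Fin n) (huv : G.Adj u v)
    (ρ : TPT (Option (Sym2 (Fin n))) NV TV) (μ μ' : List ℕ → List ℕ)
    (hwit : TransformsVia ρ (tEdge n ℓ u v) (tEdgeStar n u v) μ μ') :
    μ [] = [] ∧ ρ.head.nodes = {[]} ∧
      (ρ.head.label [] = Sum.inl (some s(u, v)) ∨
       (∃ x : NV, ρ.head.label [] = Sum.inr (Sum.inl x) ∧
          ∃ w ∈ ρ.body.nodes, w.length = ℓ ∧ ρ.body.label w = Sum.inr (Sum.inl x)) ∨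
       (∃ X : TV, ρ.head.label [] = Sum.inr (Sum.inr X) ∧
          ∃ w ∈ ρ.body.nodes, w.length = ℓ ∧ ρ.body.label w = Sum.inr (Sum.inr X))) := by
  have hμ'root : μ' [] = [] := by
    have := hwit.head_match.mem [] ρ.head.root_mem
    simpa [tEdgeStar, singleTree] using this
  have hroot : μ [] = [] := hwit.same_pos.trans hμ'root
  have hnodes : ρ.head.nodes = {[]} := by
    ext w
    constructor
    · intro hw
      have hmem := hwit.head_match.mem w hw
      have : μ' w = [] := by simpa [tEdgeStar, singleTree] using hmem
      have := hwit.head_match.inj w hw [] ρ.head.root_mem (this.trans hμ'root.symm)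
      simpa using this
    · intro hw
      simp only [Set.mem_singleton_iff] at hw
      subst hw; exact ρ.head.root_mem
  refine ⟨hroot, hnodes, ?_⟩
  -- helper: any body node mapped to a label `some s(u,v)` has length ℓ
  have key : ∀ w ∈ ρ.body.nodes,
      (tEdge n ℓ u v).label (μ w) = some s(u, v) → w.length = ℓ := by
    intro w hw hlab
    have hlen := match_len_pres hwit.body_match hroot w hw
    simp only [tEdge, fullBinTree] at hlab
    by_cases hc : μ w = binLeaf ℓ u.val ∨ μ w = binLeaf ℓ v.val
    · rcases hc with hc | hc <;> rw [hc, binLeaf_len] at hlen <;> omega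
    · simp [hc] at hlab
  rcases h : ρ.head.label [] with a | x | X
  · left
    have := hwit.head_match.const [] ρ.head.root_mem a h
    rw [hμ'root] at this
    rw [← this]; rfl
  · right; left
    obtain ⟨w, hw, hwlab⟩ := ρ.nodeVar_sub x ⟨[], ρ.head.root_mem, h⟩
    refine ⟨x, rfl, w, hw, ?_, hwlab⟩
    have hcons := hwit.nodeVar_consistent w hw [] ρ.head.root_mem x hwlab h
    rw [hμ'root] at hcons
    exact key w hw (hcons.trans rfl)
  · right; right
    obtain ⟨w, hw, hwlab⟩ := ρ.treeVar_sub X ⟨[], ρ.head.root_mem, h⟩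
    refine ⟨X, rfl, w, hw, ?_, hwlab⟩
    have hcons := hwit.treeVar_consistent w hw [] ρ.head.root_mem X hwlab h
    rw [hμ'root] at hcons
    have hlab := hcons.2 [] (Set.mem_insert _ _)
    simp only [LTree.subtreeAt, List.append_nil] at hlab
    exact key w hw (hlab.trans rfl)
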